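/- Let H be a Hopf algebra over a commutative ring R whose antipode S is bijective, let σ : R → R be a ring automorphism, and let ψ : H → H be a σ-semilinear additive map which is anti-multiplicative (ψ(a·b) = ψ(b)·ψ(a)), is a coalgebra morphism in the sense that Δ(ψ(x)) = Σ ψ(x₍₁₎) ⊗ ψ(x₍₂₎) for all x ∈ H, and satisfies S(ψ(x)) = ψ(S⁻¹(x)) for all x ∈ H. Then ψ(a)∘ψ(b) = ψ(S⁻¹(a)∘b) for all a, b ∈ H, where x∘y = Σ x₍₁₎ · y · S(x₍₂₎) is the adjoint action. -/

import Mathlib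

open TensorProduct Coalgebra

/-- The (left) adjoint action `x ∘ y = Σ x₍₁₎ * y * S(x₍₂₎)`. -/
noncomputable def adAct (R : Type*) {H : Type*} [CommRing R] [Ring H]
    [HopfAlgebra R H] (x y : H) : H :=
  ((LinearMap.mul' R H).comp
      (LinearMap.lTensor H
        ((LinearMap.mulLeft R y).comp (HopfAlgebra.antipode (R := R)))))
    (Coalgebra.comul (R := R) x)

section Conv
variable {R H B : Type*} [CommRing R] [Ring H] [HopfAlgebra R H] [Ring B] [Algebra R B]

/-- Convolution product of linear maps from a coalgebra to an algebra. -/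
noncomputable def conv (f g : H →ₗ[R] B) : H →ₗ[R] B :=
  LinearMap.mul' R B ∘ₗ TensorProduct.map f g ∘ₗ Coalgebra.comul

lemma conv_repr (f g : H →ₗ[R] B) {a : H} (r : Coalgebra.Repr R a (H × H)) :
    conv f g a = ∑ i ∈ r.index, f (r.left i) * g (r.right i) := by
  simp [conv, ← r.eq, map_sum]

/-- Convolution unit. -/
noncomputable def convUnit : H →ₗ[R] B := Algebra.linearMap R B ∘ₗ Coalgebra.counit

lemma convUnit_apply (a : H) :
    convUnit (R := R) (B := B) a = algebraMap R B (Coalgebra.counit a) := rfl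

lemma sum_counit_smul {a : H} (r : Coalgebra.Repr R a (H × H)) :
    ∑ i ∈ r.index, Coalgebra.counit (R := R) (r.left i) • r.right i = a := by
  have h := Coalgebra.sum_counit_tmul_eq r
  apply_fun (TensorProduct.lid R H) at h
  rw [map_sum] at h
  simp only [TensorProduct.lid_tmul, one_smul] at h
  exact h

lemma sum_smul_counit {a : H} (r : Coalgebra.Repr R a (H × H)) :
    ∑ i ∈ r.index, Coalgebra.counit (R := R) (r.right i) • r.left i = a := by
  have h := Coalgebra.sum_tmul_counit_eq r
  apply_fun (TensorProduct.rid R H) at h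
  rw [map_sum] at h
  simp only [TensorProduct.rid_tmul, one_smul] at h
  exact h

lemma conv_unit_left (f : H →ₗ[R] B) : conv convUnit f = f := by
  ext a
  have r := Coalgebra.Repr.arbitrary R a
  rw [conv_repr _ _ r]
  calc ∑ i ∈ r.index, convUnit (r.left i) * f (r.right i)
      = ∑ i ∈ r.index, f (Coalgebra.counit (R := R) (r.left i) • r.right i) := by
        refine Finset.sum_congr rfl fun i _ => ?_
        rw [convUnit_apply, ← Algebra.smul_def, map_smul]
    _ = f a := by rw [← map_sum, _root_.sum_counit_smul r]

lemma conv_unit_right (f : H →ₗ[R] B) : conv f convUnit = f := by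
  ext a
  have r := Coalgebra.Repr.arbitrary R a
  rw [conv_repr _ _ r]
  calc ∑ i ∈ r.index, f (r.left i) * convUnit (r.right i)
      = ∑ i ∈ r.index, f (Coalgebra.counit (R := R) (r.right i) • r.left i) := by
        refine Finset.sum_congr rfl fun i _ => ?_
        rw [convUnit_apply, ← Algebra.commutes, ← Algebra.smul_def, map_smul]
    _ = f a := by rw [← map_sum, sum_smul_counit r]

lemma conv_assoc (f g h : H →ₗ[R] B) : conv (conv f g) h = conv f (conv g h) := by
  ext a
  have r := Coalgebra.Repr.arbitrary R a
  have r₁ : (i : r.ι) → Coalgebra.Repr R (r.left i) (H × H) := fun i => Coalgebra.Repr.arbitrary R _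
  have r₂ : (i : r.ι) → Coalgebra.Repr R (r.right i) (H × H) := fun i => Coalgebra.Repr.arbitrary R _
  have key := Coalgebra.sum_map_tmul_tmul_eq (f := f) (g := g) (h := h) (a := a)
    (repr := r) (a₁ := r₁) (a₂ := r₂)
  apply_fun (LinearMap.mul' R B ∘ₗ (LinearMap.mul' R B).lTensor B) at key
  simp only [map_sum, LinearMap.comp_apply, LinearMap.lTensor_tmul, LinearMap.mul'_apply] at key
  calc conv (conv f g) h a
      = ∑ i ∈ r.index, conv f g (r.left i) * h (r.right i) := conv_repr _ _ r
    _ = ∑ i ∈ r.index, ∑ j ∈ (r₁ i).index,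
          f ((r₁ i).left j) * g ((r₁ i).right j) * h (r.right i) := by
        refine Finset.sum_congr rfl fun i _ => ?_
        rw [conv_repr _ _ (r₁ i), Finset.sum_mul]
    _ = ∑ i ∈ r.index, ∑ j ∈ (r₂ i).index,
          f (r.left i) * (g ((r₂ i).left j) * h ((r₂ i).right j)) := by
        simp only [mul_assoc]
        exact key.symm
    _ = ∑ i ∈ r.index, f (r.left i) * conv g h (r.right i) := by
        refine Finset.sum_congr rfl fun i _ => ?_
        rw [conv_repr _ _ (r₂ i), Finset.mul_sum]
    _ = conv f (conv g h) a := (conv_repr _ _ r).symm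

lemma conv_inv_unique {x y m : H →ₗ[R] B} (hx : conv x m = convUnit)
    (hy : conv m y = convUnit) : x = y := by
  have h := conv_assoc x m y
  rw [hx, hy, conv_unit_left, conv_unit_right] at h
  exact h.symm

end Conv

section Hopf
variable {R H : Type*} [CommRing R] [Ring H] [HopfAlgebra R H]

local notation "S" => HopfAlgebra.antipode (R := R) (A := H)

/-- `τ ∘ (S ⊗ S) ∘ Δ`. -/
noncomputable def antiComul : H →ₗ[R] H ⊗[R] H :=
  (TensorProduct.comm R H H).toLinearMap ∘ₗ TensorProduct.map S S ∘ₗ Coalgebra.comul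

lemma antiComul_repr {a : H} (r : Coalgebra.Repr R a (H × H)) :
    antiComul (R := R) a = ∑ i ∈ r.index, S (r.right i) ⊗ₜ[R] S (r.left i) := by
  simp [antiComul, ← r.eq, map_sum]

lemma conv_comul_comulS :
    conv (Coalgebra.comul) (Coalgebra.comul ∘ₗ S) = convUnit (R := R) (H := H) := by
  ext a
  have r := Coalgebra.Repr.arbitrary R a
  rw [conv_repr _ _ r]
  calc ∑ i ∈ r.index, Coalgebra.comul (R := R) (r.left i) * (Coalgebra.comul ∘ₗ S) (r.right i)
      = Coalgebra.comul (R := R) (∑ i ∈ r.index, r.left i * S (r.right i)) := by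
        rw [map_sum]; exact Finset.sum_congr rfl fun i _ => (Bialgebra.comul_mul _ _).symm
    _ = convUnit a := by
        rw [HopfAlgebra.sum_mul_antipode_eq_smul r, map_smul, Bialgebra.comul_one,
          convUnit_apply, Algebra.algebraMap_eq_smul_one]

/-- The key Sweedler computation: `Σ (S m₁ ⊗ c) · Δ m₂ = 1 ⊗ (c * m)`. -/
lemma inner_sweedler (c : H) {m : H} (r : Coalgebra.Repr R m (H × H)) :
    ∑ k ∈ r.index, (S (r.left k) ⊗ₜ[R] c) * Coalgebra.comul (R := R) (r.right k)
      = (1 : H) ⊗ₜ[R] (c * m) := by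
  have r₁ : (i : r.ι) → Coalgebra.Repr R (r.left i) (H × H) := fun i => Coalgebra.Repr.arbitrary R _
  have r₂ : (i : r.ι) → Coalgebra.Repr R (r.right i) (H × H) := fun i => Coalgebra.Repr.arbitrary R _
  have key := Coalgebra.sum_tmul_tmul_eq r r₁ r₂
  apply_fun (TensorProduct.map (LinearMap.mul' R H ∘ₗ LinearMap.rTensor H S)
    (LinearMap.mulLeft R c) ∘ₗ (TensorProduct.assoc R H H H).symm.toLinearMap) at key
  simp only [map_sum, LinearMap.comp_apply, LinearEquiv.coe_coe, TensorProduct.assoc_symm_tmul,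
    TensorProduct.map_tmul, LinearMap.rTensor_tmul, LinearMap.mul'_apply,
    LinearMap.mulLeft_apply] at key
  -- key LHS : ∑ i ∑ j, (S (r₁ i).left j * (r₁ i).right j) ⊗ (c * r.right i)
  -- key RHS : ∑ i ∑ j, (S (r.left i) * (r₂ i).left j) ⊗ (c * (r₂ i).right j)
  calc ∑ k ∈ r.index, (S (r.left k) ⊗ₜ[R] c) * Coalgebra.comul (R := R) (r.right k)
      = ∑ i ∈ r.index, ∑ j ∈ (r₂ i).index,
          (S (r.left i) * (r₂ i).left j) ⊗ₜ[R] (c * (r₂ i).right j) := by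
        refine Finset.sum_congr rfl fun i _ => ?_
        rw [← (r₂ i).eq, Finset.mul_sum]
        exact Finset.sum_congr rfl fun j _ => Algebra.TensorProduct.tmul_mul_tmul _ _ _ _
    _ = ∑ i ∈ r.index, ∑ j ∈ (r₁ i).index,
          (S ((r₁ i).left j) * (r₁ i).right j) ⊗ₜ[R] (c * r.right i) := key.symm
    _ = ∑ i ∈ r.index, (Coalgebra.counit (R := R) (r.left i) • (1 : H)) ⊗ₜ[R] (c * r.right i) := by
        refine Finset.sum_congr rfl fun i _ => ?_
        rw [← TensorProduct.sum_tmul, HopfAlgebra.sum_antipode_mul_eq_smul (r₁ i)]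
    _ = (1 : H) ⊗ₜ[R] (c * ∑ i ∈ r.index, Coalgebra.counit (R := R) (r.left i) • r.right i) := by
        rw [Finset.mul_sum, TensorProduct.tmul_sum]
        refine Finset.sum_congr rfl fun i _ => ?_
        rw [TensorProduct.smul_tmul, mul_smul_comm]
    _ = (1 : H) ⊗ₜ[R] (c * m) := by rw [_root_.sum_counit_smul r]

lemma conv_antiComul_comul :
    conv (antiComul (R := R) (H := H)) Coalgebra.comul = convUnit := by
  ext a
  have r := Coalgebra.Repr.arbitrary R a
  have r₁ : (i : r.ι) → Coalgebra.Repr R (r.left i) (H × H) := fun i => Coalgebra.Repr.arbitrary R _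
  have r₂ : (i : r.ι) → Coalgebra.Repr R (r.right i) (H × H) := fun i => Coalgebra.Repr.arbitrary R _
  have key := Coalgebra.sum_tmul_tmul_eq r r₁ r₂
  apply_fun (LinearMap.mul' R (H ⊗[R] H) ∘ₗ
    TensorProduct.map ((TensorProduct.comm R H H).toLinearMap ∘ₗ TensorProduct.map S S)
      Coalgebra.comul ∘ₗ (TensorProduct.assoc R H H H).symm.toLinearMap) at key
  simp only [map_sum, LinearMap.comp_apply, LinearEquiv.coe_coe, TensorProduct.assoc_symm_tmul,
    TensorProduct.map_tmul, TensorProduct.comm_tmul, LinearMap.mul'_apply] at key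
  rw [conv_repr _ _ r]
  calc ∑ i ∈ r.index, antiComul (R := R) (r.left i) * Coalgebra.comul (R := R) (r.right i)
      = ∑ i ∈ r.index, ∑ j ∈ (r₁ i).index,
          (S ((r₁ i).right j) ⊗ₜ[R] S ((r₁ i).left j)) * Coalgebra.comul (R := R) (r.right i) := by
        refine Finset.sum_congr rfl fun i _ => ?_
        rw [antiComul_repr (r₁ i), Finset.sum_mul]
    _ = ∑ i ∈ r.index, ∑ j ∈ (r₂ i).index,
          (S ((r₂ i).left j) ⊗ₜ[R] S (r.left i)) * Coalgebra.comul (R := R) ((r₂ i).right j) :=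
        key
    _ = ∑ i ∈ r.index, (1 : H) ⊗ₜ[R] (S (r.left i) * r.right i) := by
        refine Finset.sum_congr rfl fun i _ => ?_
        exact inner_sweedler (S (r.left i)) (r₂ i)
    _ = (1 : H) ⊗ₜ[R] ∑ i ∈ r.index, S (r.left i) * r.right i := by rw [TensorProduct.tmul_sum]
    _ = convUnit a := by
        rw [HopfAlgebra.sum_antipode_mul_eq_smul r, convUnit_apply,
          Algebra.algebraMap_eq_smul_one, TensorProduct.tmul_smul, Algebra.TensorProduct.one_def]

theorem comul_comp_antipode :
    Coalgebra.comul ∘ₗ S = antiComul (R := R) (H := H) :=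
  (conv_inv_unique conv_antiComul_comul conv_comul_comulS).symm

end Hopf

/-- let `H` be a Hopf algebra over `R` whose antipode `S` is bijective with
(linear) inverse `T = S⁻¹`, let `σ : R ≃+* R` be a ring automorphism, and let `ψ : H → H`
be a `σ`-semilinear additive map which is anti-multiplicative, a coalgebra morphism
(`Δ(ψ(x)) = Σ ψ(x₍₁₎) ⊗ ψ(x₍₂₎)`, expressed via finite Sweedler representations of
`Δ(x)`), and satisfies `S(ψ(x)) = ψ(S⁻¹(x))`.  Then `ψ(a) ∘ ψ(b) = ψ(S⁻¹(a) ∘ b)`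
for all `a, b ∈ H`. -/
theorem semilinear_antimorphism_adjoint_action (R H : Type*) [CommRing R] [Ring H]
    [HopfAlgebra R H] (T : H →ₗ[R] H)
    (hST : ∀ a : H, HopfAlgebra.antipode (R := R) (T a) = a)
    (hTS : ∀ a : H, T (HopfAlgebra.antipode (R := R) a) = a)
    (σ : R ≃+* R) (ψ : H → H)
    (hadd : ∀ a b : H, ψ (a + b) = ψ a + ψ b)
    (hsemi : ∀ (c : R) (a : H), ψ (c • a) = σ c • ψ a)
    (hantimul : ∀ a b : H, ψ (a * b) = ψ b * ψ a)
    (hco : ∀ (x : H) (n : ℕ) (a b : Fin n → H),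
      Coalgebra.comul (R := R) x = ∑ i, a i ⊗ₜ[R] b i →
      Coalgebra.comul (R := R) (ψ x) = ∑ i, ψ (a i) ⊗ₜ[R] ψ (b i))
    (hSψ : ∀ x : H, HopfAlgebra.antipode (R := R) (ψ x) = ψ (T x)) :
    ∀ a b : H, adAct R (ψ a) (ψ b) = ψ (adAct R (T a) b) := by
  intro a b
  -- a Sweedler representation of `Δ (T a)`
  set t := Coalgebra.Repr.arbitrary R (T a) with ht
  have hψsum : ∀ (s : Finset {x // x ∈ t.index}) (f : {x // x ∈ t.index} → H),
      ψ (∑ i ∈ s, f i) = ∑ i ∈ s, ψ (f i) := fun s f =>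
    map_sum (AddMonoidHom.mk' ψ hadd) f s
  -- `Δ a = Σ S(t.right) ⊗ S(t.left)` since the antipode is anti-comultiplicative
  have hcomula : Coalgebra.comul (R := R) a
      = ∑ i ∈ t.index, HopfAlgebra.antipode (R := R) (t.right i)
          ⊗ₜ[R] HopfAlgebra.antipode (R := R) (t.left i) := by
    have h := LinearMap.congr_fun (comul_comp_antipode (R := R) (H := H)) (T a)
    rw [LinearMap.comp_apply, hST a] at h
    rw [h, antiComul_repr t]
  -- reindex by `Fin n`
  set n := t.index.card with hn
  set e : Fin n ≃ {x // x ∈ t.index} := t.index.equivFin.symm with he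
  set aL : Fin n → H := fun i => HopfAlgebra.antipode (R := R) (t.right (e i)) with haL
  set aR : Fin n → H := fun i => HopfAlgebra.antipode (R := R) (t.left (e i)) with haR
  have hfin : Coalgebra.comul (R := R) a = ∑ i, aL i ⊗ₜ[R] aR i := by
    rw [hcomula, ← Finset.sum_coe_sort t.index
      (fun x => HopfAlgebra.antipode (R := R) (t.right x)
        ⊗ₜ[R] HopfAlgebra.antipode (R := R) (t.left x))]
    exact (Equiv.sum_comp e _).symm
  have hcoψ := hco a n aL aR hfin
  -- compute both sides
  have hLHS : adAct R (ψ a) (ψ b) = ∑ i : Fin n,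
      ψ (t.left (e i) * b * HopfAlgebra.antipode (R := R) (t.right (e i))) := by
    rw [adAct, hcoψ, map_sum]
    refine Finset.sum_congr rfl fun i _ => ?_
    simp only [LinearMap.comp_apply, LinearMap.lTensor_tmul, LinearMap.mulLeft_apply,
      LinearMap.mul'_apply]
    rw [hSψ]
    simp only [haL, haR]
    rw [hTS, ← hantimul, ← hantimul]
  have hRHS : adAct R (T a) b = ∑ i ∈ t.index,
      t.left i * (b * HopfAlgebra.antipode (R := R) (t.right i)) := by
    rw [adAct, ← t.eq, map_sum]
    refine Finset.sum_congr rfl fun i _ => ?_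
    simp only [LinearMap.comp_apply, LinearMap.lTensor_tmul, LinearMap.mulLeft_apply,
      LinearMap.mul'_apply]
  rw [hLHS, hRHS, ← Finset.sum_coe_sort t.index
      (fun x => t.left x * (b * HopfAlgebra.antipode (R := R) (t.right x))),
    hψsum, ← Equiv.sum_comp e]
  exact Finset.sum_congr rfl fun i _ => by rw [mul_assoc]
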